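/- Let p and q be primes satisfying conditions (1), and write the fundamental unit of Q(√(pq)) as ε_pq = a + b√(pq) with positive integers a, b. Then p·(a - 1) is a perfect square, and there exist integers b₁, b₂ such that 2·ε_pq = (b₁√p + b₂√q)² in Q(√p, √q) and q·b₂² - p·b₁² = 2. -/

import Mathlib

noncomputable section

open IntermediateField

/-- Conditions (1): `p` and `q` are odd primes with `p ≡ 1 (mod 4)`, `q ≡ 3 (mod 4)`,
`(2/p) = -1`, `(2/q) = 1` and `(p/q) = -1`. -/
def Cond1 (p q : ℕ) : Prop :=
  p.Prime ∧ q.Prime ∧ p % 4 = 1 ∧ q % 4 = 3 ∧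
    jacobiSym 2 p = -1 ∧ jacobiSym 2 q = 1 ∧ jacobiSym (p : ℤ) q = -1

/-- `x` is a unit of the ring of integers of the subfield `K` of `ℝ`. -/
def IsUnitOfIntegers (K : IntermediateField ℚ ℝ) (x : ℝ) : Prop :=
  x ∈ K ∧ IsIntegral ℤ x ∧ IsIntegral ℤ x⁻¹

/-- `ε` is the fundamental unit of `ℚ(√d)`: it is a unit of the ring of integers,
it is `> 1`, and every unit is `±ε^n` for some `n : ℤ`. -/
def IsFundUnit (d : ℕ) (ε : ℝ) : Prop :=
  1 < ε ∧ IsUnitOfIntegers (adjoin ℚ {Real.sqrt d}) ε ∧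
    ∀ x : ℝ, IsUnitOfIntegers (adjoin ℚ {Real.sqrt d}) x →
      ∃ n : ℤ, x = ε ^ n ∨ x = -ε ^ n

/-!
The norm of `ε_pq` is `1`, as `-1` is not a square mod `q`; hence `(a - 1)(a + 1) = pq b²`.
Split `p` and `q` between the two coprime factors (`a - 1, a + 1` if `a` is even,
`(a - 1)/2, (a + 1)/2` if `a` is odd). In all but one of the eight cases some number with
Jacobi symbol `-1` (namely `-1`, `±2`, `p`, `q` or `2p`) would be a square mod `p` or `q`;
the case `(a - 1)/2 = pq x²`, `(a + 1)/2 = y²` makes `y + x√(pq)` a unit whose square is `ε_pq`.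
What remains is `a - 1 = p x²`, `a + 1 = q y²`, `b = xy`, so `2ε_pq = (x√p + y√q)²`.
-/

open Polynomial

theorem Irrational.minpoly_rat_eq {x : ℝ} (hx : Irrational x) {c₁ c₀ : ℚ}
    (h : x ^ 2 + c₁ * x + c₀ = 0) : minpoly ℚ x = X ^ 2 + C c₁ * X + C c₀ := by
  have hP : (X ^ 2 + C c₁ * X + C c₀ : ℚ[X]).Monic := by monicity!
  have hroot : aeval x (X ^ 2 + C c₁ * X + C c₀ : ℚ[X]) = 0 := by simpa using h
  have hint : IsIntegral ℚ x := ⟨_, hP, hroot⟩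
  symm
  refine eq_of_monic_of_dvd_of_natDegree_le (minpoly.monic hint) hP (minpoly.dvd ℚ x hroot) ?_
  calc (X ^ 2 + C c₁ * X + C c₀ : ℚ[X]).natDegree = 2 := by compute_degree!
    _ ≤ (minpoly ℚ x).natDegree :=
      (minpoly.two_le_natDegree_iff hint).mpr fun ⟨r, hr⟩ ↦ hx ⟨r, hr⟩

theorem Irrational.exists_intCast_eq_of_isIntegral {x : ℝ} (hx : Irrational x)
    (hint : IsIntegral ℤ x) {c₁ c₀ : ℚ} (h : x ^ 2 + c₁ * x + c₀ = 0) :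
    ∃ k : ℤ, (k : ℚ) = c₀ := by
  have hcoeff := congrArg (coeff · 0) (minpoly.isIntegrallyClosed_eq_field_fractions' ℚ hint)
  rw [hx.minpoly_rat_eq h] at hcoeff
  exact ⟨_, by simpa using hcoeff.symm⟩

theorem isUnit_sq_sub_mul_sq_of_isIntegral_inv {d : ℕ} (hd : ¬IsSquare d) {a b : ℤ}
    (hb : b ≠ 0) (hint : IsIntegral ℤ (a + b * √d)⁻¹) : IsUnit (a ^ 2 - d * b ^ 2) := by
  have hirr : Irrational (a + b * √d) :=
    ((irrational_sqrt_natCast_iff.mpr hd).intCast_mul hb).intCast_add a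
  set N := a ^ 2 - d * b ^ 2
  have hN : (N : ℝ) = (a + b * √d) * (a - b * √d) := by
    push_cast [N]
    linear_combination (b : ℝ) ^ 2 * Real.sq_sqrt d.cast_nonneg
  have hN0 : (N : ℝ) ≠ 0 := by
    have hconj : a - b * √d = (2 * a : ℤ) + -(a + b * √d) := by push_cast; ring
    rw [hN, hconj]
    exact mul_ne_zero hirr.ne_zero (hirr.neg.intCast_add _).ne_zero
  -- `(a + b√d)⁻¹` is a root of `X² - (2a/N) X + 1/N`, so `1/N` is an integer.
  obtain ⟨k, hk⟩ := hirr.inv.exists_intCast_eq_of_isIntegral hint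
    (c₁ := -(2 * a / N)) (c₀ := 1 / N) (by
      have := hirr.ne_zero
      push_cast
      field_simp
      linear_combination hN)
  have : (N : ℚ) ≠ 0 := by exact_mod_cast hN0
  exact IsUnit.of_mul_eq_one (a := N) k
    (by exact_mod_cast (show (N : ℚ) * k = 1 by rw [hk]; field_simp))

theorem isIntegral_intCast_add_mul_sqrt (y x : ℤ) (d : ℕ) : IsIntegral ℤ (y + x * √d : ℝ) := by
  have hsqrt : IsIntegral ℤ (√d : ℝ) :=
    .of_pow two_pos (by rw [Real.sq_sqrt d.cast_nonneg]; exact isIntegral_algebraMap)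
  exact (isIntegral_intCast y).add ((isIntegral_intCast x).mul hsqrt)

theorem isUnitOfIntegers_intCast_add_mul_sqrt {d : ℕ} {y x : ℤ} (h : y ^ 2 - d * x ^ 2 = 1) :
    IsUnitOfIntegers (adjoin ℚ {√(d : ℝ)}) (y + x * √d) := by
  have hinv : (y + x * √d : ℝ)⁻¹ = (y : ℤ) + (-x : ℤ) * √d := by
    refine inv_eq_of_mul_eq_one_right ?_
    have : ((y ^ 2 - d * x ^ 2 : ℤ) : ℝ) = 1 := by exact_mod_cast h
    push_cast at this ⊢
    linear_combination -(x : ℝ) ^ 2 * Real.sq_sqrt d.cast_nonneg + this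
  refine ⟨?_, isIntegral_intCast_add_mul_sqrt y x d,
    hinv ▸ isIntegral_intCast_add_mul_sqrt y (-x) d⟩
  exact add_mem (intCast_mem _ y) (mul_mem (intCast_mem _ x) (mem_adjoin_simple_self ℚ _))

theorem IsFundUnit.sq_ne {d : ℕ} {ε η : ℝ} (hε : IsFundUnit d ε)
    (hη : IsUnitOfIntegers (adjoin ℚ {√(d : ℝ)}) η) : η ^ 2 ≠ ε := by
  intro hηε
  obtain ⟨n, hn⟩ := hε.2.2 η hη
  have hsq : ε ^ (n * 2) = ε ^ (1 : ℤ) := by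
    rw [zpow_mul, zpow_one, zpow_two, ← sq]
    rcases hn with rfl | rfl
    exacts [hηε, by rwa [neg_sq] at hηε]
  have := zpow_right_injective₀ (zero_lt_one.trans hε.1) hε.1.ne' hsq
  omega

theorem sq_ne_add_mul_of_jacobiSym_eq_neg_one {c : ℤ} {r : ℕ} (h : jacobiSym c r = -1)
    (u t : ℤ) : u ^ 2 ≠ c + r * t := by
  intro hu
  refine ZMod.nonsquare_of_jacobiSym_eq_neg_one h ⟨u, ?_⟩
  simpa [sq] using (congrArg (Int.cast : ℤ → ZMod r) hu).symm

theorem Nat.not_isSquare_mul_of_prime {p q : ℕ} (hp : p.Prime) (hq : q.Prime) (hne : p ≠ q) :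
    ¬IsSquare (p * q) := by
  rintro ⟨k, hk⟩
  have hsf : Squarefree (p * q) := Nat.squarefree_mul_iff.mpr
    ⟨(Nat.coprime_primes hp hq).mpr hne, hp.prime.squarefree, hq.prime.squarefree⟩
  have hk1 : k = 1 := Nat.isUnit_iff.mp (hsf k ⟨1, by rw [hk, mul_one]⟩)
  rw [hk1, mul_one] at hk
  exact hp.one_lt.ne' (Nat.eq_one_of_mul_eq_one_right hk)

theorem Nat.Coprime.exists_eq_sq_of_mul_eq_sq {m n c : ℕ} (hco : m.Coprime n)
    (h : m * n = c ^ 2) : ∃ x, m = x ^ 2 :=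
  exists_eq_pow_of_mul_eq_pow (Nat.isUnit_iff.mpr hco) h

theorem Nat.Coprime.exists_of_mul_eq_prime_mul {r m n t : ℕ} (hco : m.Coprime n)
    (hr : r.Prime) (h : m * n = r * t) :
    (∃ m', m = r * m' ∧ m'.Coprime n ∧ m' * n = t) ∨
      ∃ n', n = r * n' ∧ m.Coprime n' ∧ m * n' = t := by
  rcases hr.dvd_mul.mp ⟨t, h⟩ with ⟨m', rfl⟩ | ⟨n', rfl⟩
  · exact .inl ⟨m', rfl, hco.coprime_mul_left,
      Nat.eq_of_mul_eq_mul_left hr.pos (by rw [← h]; ring)⟩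
  · exact .inr ⟨n', rfl, hco.coprime_mul_left_right,
      Nat.eq_of_mul_eq_mul_left hr.pos (by rw [← h]; ring)⟩

theorem Nat.Coprime.exists_of_mul_eq_prime_mul_prime_mul_sq {r s m n c : ℕ}
    (hco : m.Coprime n) (hr : r.Prime) (hs : s.Prime) (h : m * n = r * s * c ^ 2) :
    ∃ x y, x * y = c ∧ ((m = x ^ 2 ∧ n = r * s * y ^ 2) ∨ (m = r * s * x ^ 2 ∧ n = y ^ 2) ∨
      (m = r * x ^ 2 ∧ n = s * y ^ 2) ∨ (m = s * x ^ 2 ∧ n = r * y ^ 2)) := by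
  have hsq : ∀ {m n : ℕ}, m.Coprime n → m * n = c ^ 2 →
      ∃ x y, x * y = c ∧ m = x ^ 2 ∧ n = y ^ 2 := by
    intro m n hco h
    obtain ⟨x, rfl⟩ := hco.exists_eq_sq_of_mul_eq_sq h
    obtain ⟨y, rfl⟩ := hco.symm.exists_eq_sq_of_mul_eq_sq (by rw [mul_comm, h])
    exact ⟨x, y, Nat.pow_left_injective two_ne_zero (by simp only [mul_pow, h]), rfl, rfl⟩
  rcases hco.exists_of_mul_eq_prime_mul hr (by rw [h, mul_assoc]) with
      ⟨m, rfl, hco, h⟩ | ⟨n, rfl, hco, h⟩ <;>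
    rcases hco.exists_of_mul_eq_prime_mul hs h with ⟨m, rfl, hco, h⟩ | ⟨n, rfl, hco, h⟩ <;>
    obtain ⟨x, y, hxy, rfl, rfl⟩ := hsq hco h <;>
    refine ⟨x, y, hxy, ?_⟩
  · exact .inr (.inl ⟨by ring, rfl⟩)
  · exact .inr (.inr (.inl ⟨rfl, rfl⟩))
  · exact .inr (.inr (.inr ⟨rfl, rfl⟩))
  · exact .inl ⟨rfl, by ring⟩

namespace Cond1

variable {p q : ℕ}

theorem ne (h : Cond1 p q) : p ≠ q := by
  obtain ⟨-, -, hp4, hq4, -⟩ := h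
  omega

theorem odd_p (h : Cond1 p q) : Odd p :=
  Nat.odd_iff.mpr (Nat.odd_of_mod_four_eq_one h.2.2.1)

theorem odd_q (h : Cond1 p q) : Odd q :=
  Nat.odd_iff.mpr (Nat.odd_of_mod_four_eq_three h.2.2.2.1)

theorem jacobiSym_neg_one_q (h : Cond1 p q) : jacobiSym (-1) q = -1 := by
  rw [jacobiSym.at_neg_one h.odd_q, ZMod.χ₄_nat_three_mod_four h.2.2.2.1]

theorem jacobiSym_neg_two_p (h : Cond1 p q) : jacobiSym (-2) p = -1 := by
  rw [show (-2 : ℤ) = -1 * 2 by norm_num, jacobiSym.mul_left, jacobiSym.at_neg_one h.odd_p,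
    ZMod.χ₄_nat_one_mod_four h.2.2.1, h.2.2.2.2.1, one_mul]

theorem jacobiSym_two_mul_p_q (h : Cond1 p q) : jacobiSym (2 * p) q = -1 := by
  obtain ⟨-, -, -, -, -, h2q, hpq⟩ := h
  rw [jacobiSym.mul_left, h2q, hpq, one_mul]

theorem jacobiSym_q_p (h : Cond1 p q) : jacobiSym q p = -1 := by
  rw [← jacobiSym.quadratic_reciprocity_one_mod_four h.2.2.1 h.odd_q, h.2.2.2.2.2.2]

theorem sq_eq_mul_sq_add_one (h : Cond1 p q) {ε : ℝ} (hε : IsFundUnit (p * q) ε) {a b : ℕ}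
    (hb : b ≠ 0) (hεab : ε = a + b * √((p * q : ℕ) : ℝ)) : a ^ 2 = p * q * b ^ 2 + 1 := by
  have hint : IsIntegral ℤ (((a : ℤ) : ℝ) + ((b : ℤ) : ℝ) * √((p * q : ℕ) : ℝ))⁻¹ := by
    simpa [hεab] using hε.2.1.2.2
  rcases Int.isUnit_iff.mp (isUnit_sq_sub_mul_sq_of_isIntegral_inv
    (Nat.not_isSquare_mul_of_prime h.1 h.2.1 h.ne) (by exact_mod_cast hb) hint) with hN | hN
  · push_cast at hN
    exact_mod_cast (by linear_combination hN : (a : ℤ) ^ 2 = p * q * b ^ 2 + 1)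
  · exact absurd (by push_cast at hN; linear_combination hN)
      (sq_ne_add_mul_of_jacobiSym_eq_neg_one h.jacobiSym_neg_one_q a (p * b ^ 2))

theorem not_odd (h : Cond1 p q) {ε : ℝ} (hε : IsFundUnit (p * q) ε) {a b : ℕ}
    (hεab : ε = a + b * √((p * q : ℕ) : ℝ)) (hpell : a ^ 2 = p * q * b ^ 2 + 1) : ¬Odd a := by
  obtain ⟨hp, hq, -, -, -, -, hpq⟩ := id h
  rintro ⟨k, rfl⟩
  have hb : Even b := by
    have : Even (p * q * b ^ 2) := ⟨2 * k * (k + 1), by linarith⟩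
    rcases Nat.even_mul.mp this with hpq_even | hb2
    · exact absurd hpq_even (Nat.not_even_iff_odd.mpr (h.odd_p.mul h.odd_q))
    · exact (Nat.even_pow.mp hb2).1
  obtain ⟨c, rfl⟩ := hb
  have hco : k.Coprime (k + 1) := Nat.coprime_self_add_right.mpr (Nat.coprime_one_right k)
  obtain ⟨x, y, hxy, hcases⟩ := hco.exists_of_mul_eq_prime_mul_prime_mul_sq hp hq
    (by linarith : k * (k + 1) = p * q * c ^ 2)
  rcases hcases with ⟨hm, hn⟩ | ⟨hm, hn⟩ | ⟨hm, hn⟩ | ⟨hm, hn⟩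
  · refine absurd ?_ (sq_ne_add_mul_of_jacobiSym_eq_neg_one h.jacobiSym_neg_one_q x (p * y ^ 2))
    zify at hm hn
    linear_combination hn - hm
  · refine hε.sq_ne (isUnitOfIntegers_intCast_add_mul_sqrt (y := y) (x := x) ?_) ?_
    · zify at hm hn
      push_cast
      linear_combination hm - hn
    · have hs := Real.sq_sqrt (Nat.cast_nonneg (α := ℝ) (p * q))
      rw [hεab]
      rify at hm hn hxy
      push_cast at hs ⊢
      linear_combination -hm - hn + 2 * √((p : ℝ) * q) * hxy + (x : ℝ) ^ 2 * hs
  · refine absurd ?_ (sq_ne_add_mul_of_jacobiSym_eq_neg_one h.jacobiSym_q_p (q * y) (q * x ^ 2))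
    zify at hm hn
    linear_combination (q : ℤ) * (hm - hn)
  · refine absurd ?_ (sq_ne_add_mul_of_jacobiSym_eq_neg_one hpq (p * y) (p * x ^ 2))
    zify at hm hn
    linear_combination (p : ℤ) * (hm - hn)

theorem exists_of_even (h : Cond1 p q) {a b : ℕ} (hpell : a ^ 2 = p * q * b ^ 2 + 1)
    (ha : Even a) : ∃ x y : ℕ, x * y = b ∧ a = p * x ^ 2 + 1 ∧ a + 1 = q * y ^ 2 := by
  obtain ⟨hp, hq, -, -, h2p, -⟩ := id h
  obtain ⟨m, rfl⟩ : ∃ m, a = m + 1 :=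
    Nat.exists_eq_add_one.mpr (Nat.pos_of_ne_zero (by rintro rfl; simp at hpell))
  have hco : m.Coprime (m + 2) := Nat.coprime_self_add_right.mpr
    (Nat.coprime_two_right.mpr (by simpa [Nat.even_add_one] using ha))
  obtain ⟨x, y, hxy, hcases⟩ := hco.exists_of_mul_eq_prime_mul_prime_mul_sq hp hq
    (by linarith : m * (m + 2) = p * q * b ^ 2)
  rcases hcases with ⟨hm, hn⟩ | ⟨hm, hn⟩ | ⟨hm, hn⟩ | ⟨hm, hn⟩
  · refine absurd ?_ (sq_ne_add_mul_of_jacobiSym_eq_neg_one h.jacobiSym_neg_two_p x (q * y ^ 2))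
    zify at hm hn
    linear_combination hn - hm
  · refine absurd ?_ (sq_ne_add_mul_of_jacobiSym_eq_neg_one h2p y (q * x ^ 2))
    zify at hm hn
    linear_combination hm - hn
  · exact ⟨x, y, hxy, by rw [hm], by linarith⟩
  · refine absurd ?_ (sq_ne_add_mul_of_jacobiSym_eq_neg_one h.jacobiSym_two_mul_p_q
      (p * y) (p * x ^ 2))
    zify at hm hn
    linear_combination (p : ℤ) * (hm - hn)

end Cond1

theorem statement12 (p q : ℕ) (h : Cond1 p q) (εpq : ℝ)
    (hεpq : IsFundUnit (p * q) εpq) (a b : ℤ) (ha : 0 < a) (hb : 0 < b)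
    (heq : εpq = (a : ℝ) + (b : ℝ) * Real.sqrt (p * q)) :
    (∃ s : ℤ, (p : ℤ) * (a - 1) = s ^ 2) ∧
    ∃ b₁ b₂ : ℤ, 2 * εpq = ((b₁ : ℝ) * Real.sqrt p + (b₂ : ℝ) * Real.sqrt q) ^ 2 ∧
      (q : ℤ) * b₂ ^ 2 - (p : ℤ) * b₁ ^ 2 = 2 := by
  lift a to ℕ using ha.le
  lift b to ℕ using hb.le
  have hεab : εpq = a + b * √((p * q : ℕ) : ℝ) := by push_cast; exact_mod_cast heq
  have hpell := h.sq_eq_mul_sq_add_one hεpq (by omega) hεab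
  obtain ⟨x, y, hxy, hx, hy⟩ :=
    h.exists_of_even hpell (Nat.not_odd_iff_even.mp (h.not_odd hεpq hεab hpell))
  refine ⟨⟨p * x, by rw [hx]; push_cast; ring⟩, x, y, ?_, ?_⟩
  · rw [heq, Real.sqrt_mul (Nat.cast_nonneg _)]
    rify at hx hy hxy
    push_cast
    linear_combination hx + hy - 2 * √(p : ℝ) * √(q : ℝ) * hxy
      - (x : ℝ) ^ 2 * Real.sq_sqrt (Nat.cast_nonneg (α := ℝ) p)
      - (y : ℝ) ^ 2 * Real.sq_sqrt (Nat.cast_nonneg (α := ℝ) q)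
  · zify at hx hy
    linear_combination hx - hy
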